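/- If a Young diagram Y has z steps, indexed so that the steps use rows s_1 < … < s_z and columns t_1 < … < t_z, then the map sending (x,y) ∈ Y_z to the block {(s,t) ∈ Y : s_{x−1} < s ≤ s_x, t_{y−1} < t ≤ t_y} (with s_0 = t_0 = 0) transforms any (i,j)-local partition of Y_z into actual rectangles into an (i,j)-local partition of Y into actual rectangles. -/

import Mathlib

open scoped Classical

/-- The staircase Young diagram `Y_z = {(s,t) ∈ [z]×[z] : s+t ≤ z+1}`. -/
def Yd (z : ℕ) : Set (ℕ × ℕ) :=
  {p | p.1 ∈ Set.Icc 1 z ∧ p.2 ∈ Set.Icc 1 z ∧ p.1 + p.2 ≤ z + 1}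

/-- A Young diagram with `r` rows and `c` columns: a down-left closed subset of `[r]×[c]`. -/
def IsYoung (r c : ℕ) (Y : Set (ℕ × ℕ)) : Prop :=
  Y ⊆ Set.Icc 1 r ×ˢ Set.Icc 1 c ∧
  ∀ p ∈ Y, (2 ≤ p.1 → (p.1 - 1, p.2) ∈ Y) ∧ (2 ≤ p.2 → (p.1, p.2 - 1) ∈ Y)

/-- A step of `Y`: an element whose right and upper neighbours are outside `Y`. -/
def IsStep (Y : Set (ℕ × ℕ)) (p : ℕ × ℕ) : Prop :=
  p ∈ Y ∧ (p.1 + 1, p.2) ∉ Y ∧ (p.1, p.2 + 1) ∉ Y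

def steps (Y : Set (ℕ × ℕ)) : Set (ℕ × ℕ) := {p | IsStep Y p}

/-- A generalized rectangle in `Y`: a product set contained in `Y`. -/
def IsRect (Y R : Set (ℕ × ℕ)) : Prop :=
  (∃ S T : Set ℕ, R = S ×ˢ T) ∧ R ⊆ Y

/-- An actual rectangle in `Y`: a product of intervals contained in `Y`. -/
def IsActualRect (Y R : Set (ℕ × ℕ)) : Prop :=
  (∃ a b u v : ℕ, R = Set.Icc a b ×ˢ Set.Icc u v) ∧ R ⊆ Y

def UsesRow (R : Set (ℕ × ℕ)) (s : ℕ) : Prop := ∃ t, (s, t) ∈ R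
def UsesCol (R : Set (ℕ × ℕ)) (t : ℕ) : Prop := ∃ s, (s, t) ∈ R

/-- A cover of `Y` by generalized rectangles. -/
def IsCover (Y : Set (ℕ × ℕ)) (C : Finset (Set (ℕ × ℕ))) : Prop :=
  (∀ R ∈ C, IsRect Y R) ∧ (⋃ R ∈ C, R) = Y

/-- `(i,j)`-locality: each row used by at most `i`, each column by at most `j` rectangles. -/
def IsLocal (i j : ℕ) (C : Finset (Set (ℕ × ℕ))) : Prop :=
  (∀ s, (C.filter (fun R => UsesRow R s)).card ≤ i) ∧
  (∀ t, (C.filter (fun R => UsesCol R t)).card ≤ j)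

def IsLocalCover (i j : ℕ) (Y : Set (ℕ × ℕ)) (C : Finset (Set (ℕ × ℕ))) : Prop :=
  IsCover Y C ∧ IsLocal i j C

/-- The block of `Y` corresponding to position `(x,y)` of the staircase. -/
def blk (Y : Set (ℕ × ℕ)) (sR tC : ℕ → ℕ) (x y : ℕ) : Set (ℕ × ℕ) :=
  {p ∈ Y | sR (x - 1) < p.1 ∧ p.1 ≤ sR x ∧ tC (y - 1) < p.2 ∧ p.2 ≤ tC y}

/-- The union of the blocks corresponding to the elements of `R ⊆ Y_z`. -/
def blowup (Y : Set (ℕ × ℕ)) (sR tC : ℕ → ℕ) (R : Set (ℕ × ℕ)) : Set (ℕ × ℕ) :=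
  ⋃ p ∈ R, blk Y sR tC p.1 p.2

/-!
Steps of a Young diagram are its maximal cells, so along the steps the rows increase while the
columns decrease; with `z` steps indexed by `s_1 < … < s_z` and `t_1 < … < t_z` this forces the
step in row `s_x` to lie in column `t_{z+1-x}`. Hence the block of a cell `(x, y)` of `Y_z` is the
full box `(s_{x-1}, s_x] × (t_{y-1}, t_y]`, these boxes tile `Y`, and the blow-up of a rectangle
`[a, b] × [u, v]` is the rectangle `(s_{a-1}, s_b] × (t_{u-1}, t_v]`. A row of `Y` meets the blocks
of a single row of `Y_z` only, so blowing up does not increase the number of rectangles per row,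
and likewise per column.
-/

open Set

namespace IsYoung

variable {r c : ℕ} {Y : Set (ℕ × ℕ)}

lemma fst_mem_of_le (hY : IsYoung r c Y) {a b t : ℕ} (ha : 1 ≤ a) (hab : a ≤ b)
    (hb : (b, t) ∈ Y) : (a, t) ∈ Y := by
  induction b, hab using Nat.le_induction with
  | base => exact hb
  | succ b hab ih => exact ih ((hY.2 _ hb).1 (by simp only; omega))

lemma snd_mem_of_le (hY : IsYoung r c Y) {s a b : ℕ} (ha : 1 ≤ a) (hab : a ≤ b)
    (hb : (s, b) ∈ Y) : (s, a) ∈ Y := by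
  induction b, hab using Nat.le_induction with
  | base => exact hb
  | succ b hab ih => exact ih ((hY.2 _ hb).2 (by simp only; omega))

lemma mem_of_le (hY : IsYoung r c Y) {p q : ℕ × ℕ} (hq : q ∈ Y) (hpq : p ≤ q)
    (hp₁ : 1 ≤ p.1) (hp₂ : 1 ≤ p.2) : p ∈ Y :=
  hY.snd_mem_of_le hp₂ hpq.2 (hY.fst_mem_of_le hp₁ hpq.1 hq)

lemma finite (hY : IsYoung r c Y) : Y.Finite :=
  ((finite_Icc 1 r).prod (finite_Icc 1 c)).subset hY.1

lemma isStep_iff_maximal (hY : IsYoung r c Y) {q : ℕ × ℕ} :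
    IsStep Y q ↔ Maximal (· ∈ Y) q := by
  constructor
  · rintro ⟨hq, hright, hup⟩
    obtain ⟨⟨hq₁, -⟩, hq₂, -⟩ := hY.1 hq
    refine ⟨hq, fun q' hq' hle => ⟨?_, ?_⟩⟩
    · by_contra hlt
      exact hright (hY.mem_of_le hq' ⟨by simp only; omega, hle.2⟩ (by simp only; omega) hq₂)
    · by_contra hlt
      exact hup (hY.mem_of_le hq' ⟨hle.1, by simp only; omega⟩ hq₁ (by simp only; omega))
  · intro hmax
    refine ⟨hmax.prop, fun hright => ?_, fun hup => ?_⟩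
    · have := (hmax.2 hright ⟨Nat.le_succ _, le_rfl⟩).1
      simp at this
    · have := (hmax.2 hup ⟨le_rfl, Nat.le_succ _⟩).2
      simp at this

lemma exists_isStep_ge (hY : IsYoung r c Y) {p : ℕ × ℕ} (hp : p ∈ Y) :
    ∃ q, IsStep Y q ∧ p ≤ q := by
  obtain ⟨q, hpq, hq⟩ := hY.finite.exists_le_maximal hp
  exact ⟨q, hY.isStep_iff_maximal.2 hq, hpq⟩

lemma eq_of_isStep_of_le (hY : IsYoung r c Y) {q q' : ℕ × ℕ} (hq : IsStep Y q)
    (hq' : IsStep Y q') (hle : q ≤ q') : q = q' :=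
  (hY.isStep_iff_maximal.1 hq).eq_of_le hq'.1 hle

lemma snd_lt_of_fst_lt (hY : IsYoung r c Y) {q q' : ℕ × ℕ} (hq : IsStep Y q)
    (hq' : IsStep Y q') (hlt : q.1 < q'.1) : q'.2 < q.2 := by
  by_contra! hle
  rw [hY.eq_of_isStep_of_le hq hq' ⟨hlt.le, hle⟩] at hlt
  exact lt_irrefl _ hlt

lemma eq_of_fst_eq (hY : IsYoung r c Y) {q q' : ℕ × ℕ} (hq : IsStep Y q)
    (hq' : IsStep Y q') (heq : q.1 = q'.1) : q = q' := by
  rcases le_total q.2 q'.2 with hle | hle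
  · exact hY.eq_of_isStep_of_le hq hq' ⟨heq.le, hle⟩
  · exact (hY.eq_of_isStep_of_le hq' hq ⟨heq.ge, hle⟩).symm

end IsYoung

lemma exists_mem_Ioc_sub_one_of_mem_Ioc {α : Type*} [LinearOrder α] (f : ℕ → α) {a b : ℕ}
    {s : α} (hab : a ≤ b) (hs : s ∈ Ioc (f a) (f b)) :
    ∃ x ∈ Ioc a b, s ∈ Ioc (f (x - 1)) (f x) := by
  induction b, hab using Nat.le_induction with
  | base => exact absurd (hs.1.trans_le hs.2) (lt_irrefl _)
  | succ b hab ih =>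
    by_cases hsb : s ≤ f b
    · obtain ⟨x, hx, hsx⟩ := ih ⟨hs.1, hsb⟩
      exact ⟨x, ⟨hx.1, hx.2.trans b.le_succ⟩, hsx⟩
    · exact ⟨b + 1, ⟨by omega, le_rfl⟩, lt_of_not_ge hsb, hs.2⟩

lemma eq_of_mem_Ioc_sub_one {α : Type*} [Preorder α] {f : ℕ → α} {z x x' : ℕ} {s : α}
    (hf : MonotoneOn f (Icc 0 z)) (hx : x ∈ Icc 1 z) (hx' : x' ∈ Icc 1 z)
    (hs : s ∈ Ioc (f (x - 1)) (f x)) (hs' : s ∈ Ioc (f (x' - 1)) (f x')) : x = x' := by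
  wlog hlt : x < x' generalizing x x'
  · rcases (not_lt.1 hlt).lt_or_eq with hgt | heq
    · exact (this hx' hx hs' hs hgt).symm
    · exact heq.symm
  have hle : f x ≤ f (x' - 1) :=
    hf ⟨x.zero_le, hx.2⟩ ⟨(x' - 1).zero_le, by have := hx'.2; omega⟩ (by omega)
  exact absurd (hs'.1.trans_le (hs.2.trans hle)) (lt_irrefl _)

lemma eq_sub_of_strictAntiOn_Icc {g : ℕ → ℕ} {z x : ℕ} (hg : StrictAntiOn g (Icc 1 z))
    (hmaps : MapsTo g (Icc 1 z) (Icc 1 z)) (hx : x ∈ Icc 1 z) : g x = z + 1 - x := by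
  have gap : ∀ a k, 1 ≤ a → a + k ≤ z → g (a + k) + k ≤ g a := by
    intro a k ha hak
    induction k with
    | zero => simp
    | succ k ih =>
      have := hg ⟨by omega, by omega⟩ ⟨by omega, hak⟩ (Nat.lt_succ_self (a + k))
      have := ih (by omega)
      omega
  obtain ⟨hx₁, hxz⟩ := hx
  have h₁ := gap x (z - x) hx₁ (by omega)
  have h₂ := gap 1 (x - 1) le_rfl (by omega)
  have hgz := (hmaps ⟨hx₁.trans hxz, le_rfl⟩).1
  have hg₁ := (hmaps ⟨le_rfl, hx₁.trans hxz⟩).2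
  rw [show x + (z - x) = z by omega] at h₁
  rw [show 1 + (x - 1) = x by omega] at h₂
  omega

lemma Finset.card_filter_image_le {α β : Type*} [DecidableEq β] (C : Finset α) (f : α → β)
    {P : β → Prop} {Q : α → Prop} [DecidablePred P] [DecidablePred Q]
    (h : ∀ a ∈ C, P (f a) → Q a) : ((C.image f).filter P).card ≤ (C.filter Q).card := by
  rw [Finset.filter_image]
  refine Finset.card_image_le.trans (Finset.card_le_card fun a ha => ?_)
  rw [Finset.mem_filter] at ha ⊢
  exact ⟨ha.1, h a ha.1 ha.2⟩

structure StepIndexing (r c z : ℕ) (Y : Set (ℕ × ℕ)) (sR tC : ℕ → ℕ) : Prop where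
  young : IsYoung r c Y
  row_zero : sR 0 = 0
  col_zero : tC 0 = 0
  row_strictMonoOn : StrictMonoOn sR (Icc 0 z)
  col_strictMonoOn : StrictMonoOn tC (Icc 0 z)
  fst_image_steps : Prod.fst '' steps Y = sR '' Icc 1 z
  snd_image_steps : Prod.snd '' steps Y = tC '' Icc 1 z

section Blocks

variable {z : ℕ} {Y : Set (ℕ × ℕ)} {sR tC : ℕ → ℕ}

lemma blk_eq_inter (x y : ℕ) :
    blk Y sR tC x y = Y ∩ Ioc (sR (x - 1)) (sR x) ×ˢ Ioc (tC (y - 1)) (tC y) := by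
  ext p
  simp only [blk, mem_sep_iff, mem_inter_iff, mem_prod, mem_Ioc, and_assoc]

lemma mem_blowup {R : Set (ℕ × ℕ)} {p : ℕ × ℕ} :
    p ∈ blowup Y sR tC R ↔ ∃ q ∈ R, p ∈ blk Y sR tC q.1 q.2 := by
  simp [blowup]

lemma blowup_subset (R : Set (ℕ × ℕ)) : blowup Y sR tC R ⊆ Y := fun _ hp => by
  obtain ⟨_, -, hpq⟩ := mem_blowup.1 hp
  exact hpq.1

lemma blowup_biUnion (C : Finset (Set (ℕ × ℕ))) :
    blowup Y sR tC (⋃ R ∈ C, R) = ⋃ R ∈ C, blowup Y sR tC R := by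
  ext p
  simp only [mem_blowup, mem_iUnion]
  aesop

lemma eq_of_mem_blk_of_mem_blk (hs : MonotoneOn sR (Icc 0 z)) (ht : MonotoneOn tC (Icc 0 z))
    {q q' p : ℕ × ℕ} (hq : q ∈ Yd z) (hq' : q' ∈ Yd z) (hp : p ∈ blk Y sR tC q.1 q.2)
    (hp' : p ∈ blk Y sR tC q'.1 q'.2) : q = q' :=
  Prod.ext (eq_of_mem_Ioc_sub_one hs hq.1 hq'.1 ⟨hp.2.1, hp.2.2.1⟩ ⟨hp'.2.1, hp'.2.2.1⟩)
    (eq_of_mem_Ioc_sub_one ht hq.2.1 hq'.2.1 ⟨hp.2.2.2.1, hp.2.2.2.2⟩ ⟨hp'.2.2.2.1, hp'.2.2.2.2⟩)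

lemma disjoint_blowup (hs : MonotoneOn sR (Icc 0 z)) (ht : MonotoneOn tC (Icc 0 z))
    {R R' : Set (ℕ × ℕ)} (hR : R ⊆ Yd z) (hR' : R' ⊆ Yd z) (hRR' : Disjoint R R') :
    Disjoint (blowup Y sR tC R) (blowup Y sR tC R') := by
  refine disjoint_left.2 fun p hp hp' => ?_
  obtain ⟨q, hq, hpq⟩ := mem_blowup.1 hp
  obtain ⟨q', hq', hpq'⟩ := mem_blowup.1 hp'
  obtain rfl := eq_of_mem_blk_of_mem_blk hs ht (hR hq) (hR' hq') hpq hpq'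
  exact disjoint_left.1 hRR' hq hq'

lemma exists_usesRow_of_usesRow_blowup (hs : MonotoneOn sR (Icc 0 z)) (s : ℕ) :
    ∃ x, ∀ R ⊆ Yd z, UsesRow (blowup Y sR tC R) s → UsesRow R x := by
  by_cases hrow : ∃ x ∈ Icc 1 z, s ∈ Ioc (sR (x - 1)) (sR x)
  · obtain ⟨x, hx, hsx⟩ := hrow
    refine ⟨x, fun R hR ⟨t, hst⟩ => ?_⟩
    obtain ⟨q, hq, hblk⟩ := mem_blowup.1 hst
    obtain rfl : q.1 = x := eq_of_mem_Ioc_sub_one hs (hR hq).1 hx ⟨hblk.2.1, hblk.2.2.1⟩ hsx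
    exact ⟨q.2, hq⟩
  · refine ⟨0, fun R hR ⟨t, hst⟩ => ?_⟩
    obtain ⟨q, hq, hblk⟩ := mem_blowup.1 hst
    exact absurd ⟨q.1, (hR hq).1, hblk.2.1, hblk.2.2.1⟩ hrow

lemma exists_usesCol_of_usesCol_blowup (ht : MonotoneOn tC (Icc 0 z)) (t : ℕ) :
    ∃ y, ∀ R ⊆ Yd z, UsesCol (blowup Y sR tC R) t → UsesCol R y := by
  by_cases hcol : ∃ y ∈ Icc 1 z, t ∈ Ioc (tC (y - 1)) (tC y)
  · obtain ⟨y, hy, hty⟩ := hcol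
    refine ⟨y, fun R hR ⟨s, hst⟩ => ?_⟩
    obtain ⟨q, hq, hblk⟩ := mem_blowup.1 hst
    obtain rfl : q.2 = y :=
      eq_of_mem_Ioc_sub_one ht (hR hq).2.1 hy ⟨hblk.2.2.2.1, hblk.2.2.2.2⟩ hty
    exact ⟨q.1, hq⟩
  · refine ⟨0, fun R hR ⟨s, hst⟩ => ?_⟩
    obtain ⟨q, hq, hblk⟩ := mem_blowup.1 hst
    exact absurd ⟨q.2, (hR hq).2.1, hblk.2.2.2.1, hblk.2.2.2.2⟩ hcol

lemma isLocal_image_blowup {i j : ℕ} (hs : MonotoneOn sR (Icc 0 z))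
    (ht : MonotoneOn tC (Icc 0 z)) {C : Finset (Set (ℕ × ℕ))} (hC : ∀ R ∈ C, R ⊆ Yd z)
    (hloc : IsLocal i j C) : IsLocal i j (C.image (blowup Y sR tC)) := by
  constructor
  · intro s
    obtain ⟨x, hx⟩ := exists_usesRow_of_usesRow_blowup (Y := Y) (tC := tC) hs s
    exact (Finset.card_filter_image_le C _ (P := (UsesRow · s)) fun R hR => hx R (hC R hR)).trans
      (hloc.1 x)
  · intro t
    obtain ⟨y, hy⟩ := exists_usesCol_of_usesCol_blowup (Y := Y) (sR := sR) ht t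
    exact (Finset.card_filter_image_le C _ (P := (UsesCol · t)) fun R hR => hy R (hC R hR)).trans
      (hloc.2 y)

end Blocks

namespace StepIndexing

variable {r c z : ℕ} {Y : Set (ℕ × ℕ)} {sR tC : ℕ → ℕ}

lemma exists_isStep_row (h : StepIndexing r c z Y sR tC) {x : ℕ} (hx : x ∈ Icc 1 z) :
    ∃ y ∈ Icc 1 z, IsStep Y (sR x, tC y) := by
  obtain ⟨q, hq, hqx⟩ : sR x ∈ Prod.fst '' steps Y := h.fst_image_steps ▸ ⟨x, hx, rfl⟩
  obtain ⟨y, hy, hqy⟩ : q.2 ∈ tC '' Icc 1 z := h.snd_image_steps ▸ ⟨q, hq, rfl⟩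
  refine ⟨y, hy, ?_⟩
  rw [← hqx, hqy]
  exact hq

lemma isStep_staircase (h : StepIndexing r c z Y sR tC) {x : ℕ} (hx : x ∈ Icc 1 z) :
    IsStep Y (sR x, tC (z + 1 - x)) := by
  choose! g hg hstep using fun x (hx : x ∈ Icc 1 z) => h.exists_isStep_row hx
  have hsub : Icc 1 z ⊆ Icc 0 z := Icc_subset_Icc_left zero_le_one
  have hanti : StrictAntiOn g (Icc 1 z) := fun a ha b hb hab =>
    (h.col_strictMonoOn.lt_iff_lt (hsub (hg b hb)) (hsub (hg a ha))).1
      (h.young.snd_lt_of_fst_lt (hstep a ha) (hstep b hb)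
        (h.row_strictMonoOn (hsub ha) (hsub hb) hab))
  rw [← eq_sub_of_strictAntiOn_Icc hanti (fun a ha => hg a ha) hx]
  exact hstep x hx

lemma prod_subset (h : StepIndexing r c z Y sR tC) {x y : ℕ} (hxy : (x, y) ∈ Yd z) :
    Ioc (sR (x - 1)) (sR x) ×ˢ Ioc (tC (y - 1)) (tC y) ⊆ Y := by
  obtain ⟨hx, ⟨hy₁, hyz⟩, hsum⟩ := hxy
  simp only at hsum
  have := hx.1
  rintro ⟨s, t⟩ ⟨hs, ht⟩
  have hty : tC y ≤ tC (z + 1 - x) :=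
    h.col_strictMonoOn.monotoneOn ⟨y.zero_le, hyz⟩ ⟨(z + 1 - x).zero_le, by omega⟩ (by omega)
  exact h.young.mem_of_le (h.isStep_staircase hx).1 ⟨hs.2, ht.2.trans hty⟩
    (by have := hs.1; simp only at this ⊢; omega) (by have := ht.1; simp only at this ⊢; omega)

lemma blk_eq (h : StepIndexing r c z Y sR tC) {x y : ℕ} (hxy : (x, y) ∈ Yd z) :
    blk Y sR tC x y = Ioc (sR (x - 1)) (sR x) ×ˢ Ioc (tC (y - 1)) (tC y) := by
  rw [blk_eq_inter, inter_eq_right.2 (h.prod_subset hxy)]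

lemma exists_mem_blk (h : StepIndexing r c z Y sR tC) {p : ℕ × ℕ} (hp : p ∈ Y) :
    ∃ q ∈ Yd z, p ∈ blk Y sR tC q.1 q.2 := by
  obtain ⟨q, hq, hpq⟩ := h.young.exists_isStep_ge hp
  obtain ⟨x₀, hx₀, hqx₀⟩ : q.1 ∈ sR '' Icc 1 z := h.fst_image_steps ▸ ⟨q, hq, rfl⟩
  have hqy₀ : q.2 = tC (z + 1 - x₀) :=
    congrArg Prod.snd (h.young.eq_of_fst_eq hq (h.isStep_staircase hx₀) hqx₀.symm)
  obtain ⟨⟨hp₁, -⟩, hp₂, -⟩ := h.young.1 hp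
  obtain ⟨x, hx, hpx⟩ := exists_mem_Ioc_sub_one_of_mem_Ioc sR x₀.zero_le
    ⟨by rw [h.row_zero]; omega, hpq.1.trans_eq hqx₀.symm⟩
  obtain ⟨y, hy, hpy⟩ := exists_mem_Ioc_sub_one_of_mem_Ioc tC (z + 1 - x₀).zero_le
    ⟨by rw [h.col_zero]; omega, hpq.2.trans_eq hqy₀⟩
  have := hx₀.1; have := hx₀.2; have := hx.2; have := hy.2
  exact ⟨(x, y), ⟨⟨hx.1, by omega⟩, ⟨hy.1, by omega⟩, by simp only; omega⟩,
    hp, hpx.1, hpx.2, hpy.1, hpy.2⟩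

lemma blowup_staircase (h : StepIndexing r c z Y sR tC) : blowup Y sR tC (Yd z) = Y :=
  (blowup_subset _).antisymm fun _ hp => mem_blowup.2 (h.exists_mem_blk hp)

lemma blowup_Icc_prod (h : StepIndexing r c z Y sR tC) {a b u v : ℕ} (hab : a ≤ b)
    (huv : u ≤ v) (hR : Icc a b ×ˢ Icc u v ⊆ Yd z) :
    blowup Y sR tC (Icc a b ×ˢ Icc u v) = Ioc (sR (a - 1)) (sR b) ×ˢ Ioc (tC (u - 1)) (tC v) := by
  obtain ⟨⟨ha, -⟩, ⟨hu, -⟩, -⟩ := hR (show (a, u) ∈ _ from ⟨⟨le_rfl, hab⟩, le_rfl, huv⟩)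
  obtain ⟨⟨-, hb⟩, -, -⟩ := hR (show (b, u) ∈ _ from ⟨⟨hab, le_rfl⟩, le_rfl, huv⟩)
  obtain ⟨-, ⟨-, hv⟩, -⟩ := hR (show (a, v) ∈ _ from ⟨⟨le_rfl, hab⟩, huv, le_rfl⟩)
  have hs := h.row_strictMonoOn.monotoneOn
  have ht := h.col_strictMonoOn.monotoneOn
  ext p
  rw [mem_blowup]
  constructor
  · rintro ⟨q, hq, hp⟩
    rw [h.blk_eq (hR hq)] at hp
    obtain ⟨⟨hp₁, hp₁'⟩, hp₂, hp₂'⟩ := hp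
    obtain ⟨⟨hqa, hqb⟩, hqu, hqv⟩ := hq
    refine ⟨⟨(hs ⟨?_, ?_⟩ ⟨?_, ?_⟩ ?_).trans_lt hp₁, hp₁'.trans (hs ⟨?_, ?_⟩ ⟨?_, ?_⟩ hqb)⟩,
      (ht ⟨?_, ?_⟩ ⟨?_, ?_⟩ ?_).trans_lt hp₂, hp₂'.trans (ht ⟨?_, ?_⟩ ⟨?_, ?_⟩ hqv)⟩ <;> omega
  · rintro ⟨hp₁, hp₂⟩
    obtain ⟨x, ⟨hax, hxb⟩, hpx⟩ :=
      exists_mem_Ioc_sub_one_of_mem_Ioc sR ((a.sub_le 1).trans hab) hp₁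
    obtain ⟨y, ⟨huy, hyv⟩, hpy⟩ :=
      exists_mem_Ioc_sub_one_of_mem_Ioc tC ((u.sub_le 1).trans huv) hp₂
    have hxy : (x, y) ∈ Icc a b ×ˢ Icc u v := ⟨⟨by omega, hxb⟩, by omega, hyv⟩
    exact ⟨(x, y), hxy, by rw [h.blk_eq (hR hxy)]; exact ⟨hpx, hpy⟩⟩

lemma isActualRect_blowup (h : StepIndexing r c z Y sR tC) {R : Set (ℕ × ℕ)}
    (hR : IsActualRect (Yd z) R) : IsActualRect Y (blowup Y sR tC R) := by
  obtain ⟨⟨a, b, u, v, rfl⟩, hsub⟩ := hR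
  refine ⟨?_, blowup_subset _⟩
  by_cases hne : a ≤ b ∧ u ≤ v
  · refine ⟨sR (a - 1) + 1, sR b, tC (u - 1) + 1, tC v, ?_⟩
    rw [h.blowup_Icc_prod hne.1 hne.2 hsub, Icc_add_one_left_eq_Ioc, Icc_add_one_left_eq_Ioc]
  · have hempty : Icc a b ×ˢ Icc u v = ∅ := by
      rw [prod_eq_empty_iff, Icc_eq_empty_iff, Icc_eq_empty_iff]
      omega
    exact ⟨1, 0, 1, 0, by simp [hempty, blowup]⟩

end StepIndexing

theorem blowup_partition (i j r c z : ℕ) (Y : Set (ℕ × ℕ)) (hY : IsYoung r c Y)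
    (sR tC : ℕ → ℕ) (hs0 : sR 0 = 0) (ht0 : tC 0 = 0)
    (hsmono : StrictMonoOn sR (Set.Icc 0 z)) (htmono : StrictMonoOn tC (Set.Icc 0 z))
    (hrows : Prod.fst '' steps Y = sR '' Set.Icc 1 z)
    (hcols : Prod.snd '' steps Y = tC '' Set.Icc 1 z)
    (C : Finset (Set (ℕ × ℕ)))
    (hrect : ∀ R ∈ C, IsActualRect (Yd z) R)
    (hcover : (⋃ R ∈ C, R) = Yd z)
    (hdisj : ∀ R ∈ C, ∀ R' ∈ C, R ≠ R' → Disjoint R R')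
    (hloc : IsLocal i j C) :
    (∀ R' ∈ C.image (blowup Y sR tC), IsActualRect Y R') ∧
    (⋃ R' ∈ C.image (blowup Y sR tC), R') = Y ∧
    (∀ R' ∈ C.image (blowup Y sR tC), ∀ R'' ∈ C.image (blowup Y sR tC),
      R' ≠ R'' → Disjoint R' R'') ∧
    IsLocal i j (C.image (blowup Y sR tC)) := by
  have h : StepIndexing r c z Y sR tC := ⟨hY, hs0, ht0, hsmono, htmono, hrows, hcols⟩
  have hsub : ∀ R ∈ C, R ⊆ Yd z := fun R hR => (hrect R hR).2
  refine ⟨Finset.forall_mem_image.2 fun R hR => h.isActualRect_blowup (hrect R hR), ?_, ?_,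
    isLocal_image_blowup hsmono.monotoneOn htmono.monotoneOn hsub hloc⟩
  · rw [Finset.set_biUnion_finset_image, ← blowup_biUnion, hcover, h.blowup_staircase]
  · simp only [Finset.forall_mem_image]
    intro R hR R' hR' hne
    exact disjoint_blowup hsmono.monotoneOn htmono.monotoneOn (hsub R hR) (hsub R' hR')
      (hdisj R hR R' hR' (ne_of_apply_ne _ hne))
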